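/- arXiv:1005.1852 — 6 statements merged into one kernel-verified Lean document; each statement's English description precedes it below -/
import Mathlib

section
/- The union of a directed (under inclusion) family of open projective convex sets in a real projective space is an open projective convex set, provided the union is not the whole space; in fact the union is never the whole space when all members are convex, since a projective convex set contains no full projective line and by compactness a directed open cover containing a line would have a member containing that line. -/
/-!
Given `p ≠ q` in the union, directedness puts both in one member `S`, and the convexity of `S`
puts one of the two segments from `p` to `q` into the union. The two segments together make up
the projective line through `p` and `q`, which is compact as the image of a circle. If it lay in
the union, a single member of the directed open cover would contain it, and that member would
contain both segments, against its convexity.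
-/

open scoped LinearAlgebra.Projectivization
open Projectivization

/-- The "positive" projective segment joining the points represented by `u` and `v`:
`{π(a•u + b•v) : a*b ≥ 0, (a,b) ≠ (0,0)}`. -/
def projSeg {W : Type*} [AddCommGroup W] [Module ℝ W] (u v : W) : Set (ℙ ℝ W) :=
  {x | ∃ (a b : ℝ) (h : a • u + b • v ≠ 0),
    0 ≤ a * b ∧ x = Projectivization.mk ℝ (a • u + b • v) h}

/-- The "negative" projective segment joining the points represented by `u` and `v`:
`{π(a•u + b•v) : a*b ≤ 0, (a,b) ≠ (0,0)}`. -/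
def projSegN {W : Type*} [AddCommGroup W] [Module ℝ W] (u v : W) : Set (ℙ ℝ W) :=
  {x | ∃ (a b : ℝ) (h : a • u + b • v ≠ 0),
    a * b ≤ 0 ∧ x = Projectivization.mk ℝ (a • u + b • v) h}

/-- A set in a real projective space is projective convex if for any two distinct points of it,
exactly one of the two projective segments joining them is contained in it. -/
def IsProjConvex {W : Type*} [AddCommGroup W] [Module ℝ W] (S : Set (ℙ ℝ W)) : Prop :=
  ∀ p ∈ S, ∀ q ∈ S, p ≠ q →
    Xor' (projSeg p.rep q.rep ⊆ S) (projSegN p.rep q.rep ⊆ S)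

/-- The quotient topology on a real projective space. -/
noncomputable instance projTopInst {W : Type*} [NormedAddCommGroup W] [NormedSpace ℝ W] :
    TopologicalSpace (ℙ ℝ W) :=
  instTopologicalSpaceQuotient

open Set

theorem IsCompact.exists_mem_subset_of_subset_sUnion_of_directedOn {X : Type*}
    [TopologicalSpace X] {K : Set X} {F : Set (Set X)} (hK : IsCompact K) (hne : F.Nonempty)
    (hdir : DirectedOn (· ⊆ ·) F) (hF : ∀ S ∈ F, IsOpen S) (hKF : K ⊆ ⋃₀ F) :
    ∃ T ∈ F, K ⊆ T := by
  have := hne.to_subtype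
  rw [sUnion_eq_iUnion] at hKF
  obtain ⟨T, hKT⟩ := hK.elim_directed_cover _ (fun T : F => hF T T.2) hKF hdir.directed_val
  exact ⟨T, T.2, hKT⟩

namespace Projectivization

theorem linearIndependent_rep_pair {K V : Type*} [DivisionRing K] [AddCommGroup V] [Module K V]
    {p q : ℙ K V} (hpq : p ≠ q) : LinearIndependent K ![p.rep, q.rep] := by
  rw [← independent_mk_iff_LinearIndependent (K := K) p.rep_nonzero q.rep_nonzero, mk_rep, mk_rep]
  exact (independent_pair_iff_ne p q).2 hpq

theorem continuous_mk' {W : Type*} [NormedAddCommGroup W] [NormedSpace ℝ W] :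
    Continuous (mk' ℝ : {w : W // w ≠ 0} → ℙ ℝ W) :=
  continuous_quotient_mk'

end Projectivization

section ProjLine

variable {W : Type*} [AddCommGroup W] [Module ℝ W]

def projLine (u v : W) : Set (ℙ ℝ W) :=
  {x | ∃ (a b : ℝ) (h : a • u + b • v ≠ 0), x = mk ℝ (a • u + b • v) h}

theorem projSeg_union_projSegN (u v : W) : projSeg u v ∪ projSegN u v = projLine u v := by
  ext x
  constructor
  · rintro (⟨a, b, h, -, rfl⟩ | ⟨a, b, h, -, rfl⟩) <;> exact ⟨a, b, h, rfl⟩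
  · rintro ⟨a, b, h, rfl⟩
    rcases le_total 0 (a * b) with hab | hab
    exacts [Or.inl ⟨a, b, h, hab, rfl⟩, Or.inr ⟨a, b, h, hab, rfl⟩]

theorem mem_projSeg_left (p : ℙ ℝ W) (v : W) : p ∈ projSeg p.rep v :=
  ⟨1, 0, by simpa using p.rep_nonzero, by norm_num, by simp⟩

theorem mem_projSeg_right (u : W) (q : ℙ ℝ W) : q ∈ projSeg u q.rep :=
  ⟨0, 1, by simpa using q.rep_nonzero, by norm_num, by simp⟩

theorem IsProjConvex.not_projLine_subset {S : Set (ℙ ℝ W)} (hS : IsProjConvex S)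
    {p q : ℙ ℝ W} (hpq : p ≠ q) : ¬ projLine p.rep q.rep ⊆ S := by
  intro hline
  rw [← projSeg_union_projSegN, union_subset_iff] at hline
  have hp : p ∈ S := hline.1 (mem_projSeg_left p q.rep)
  have hq : q ∈ S := hline.1 (mem_projSeg_right p.rep q)
  rcases hS p hp q hq hpq with ⟨-, hN⟩ | ⟨-, hP⟩
  exacts [hN hline.2, hP hline.1]

end ProjLine

theorem isCompact_projLine {W : Type*} [NormedAddCommGroup W] [NormedSpace ℝ W] {u v : W}
    (huv : LinearIndependent ℝ ![u, v]) : IsCompact (projLine u v) := by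
  have hne : ∀ w : ℝ × ℝ, w ≠ 0 → w.1 • u + w.2 • v ≠ 0 := fun w hw h =>
    hw (Prod.ext_iff.2 (LinearIndependent.pair_iff.1 huv w.1 w.2 h))
  have hrange : projLine u v = range fun w : Metric.sphere (0 : ℝ × ℝ) 1 =>
      mk' ℝ ⟨w.1.1 • u + w.1.2 • v, hne w (ne_zero_of_mem_unit_sphere w)⟩ := by
    refine Subset.antisymm ?_ ?_
    · rintro _ ⟨a, b, h, rfl⟩
      have hab : (a, b) ≠ 0 := fun h0 => by
        obtain ⟨rfl, rfl⟩ := Prod.mk_eq_zero.1 h0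
        simp at h
      have hr : ‖(a, b)‖ ≠ 0 := norm_ne_zero_iff.2 hab
      refine ⟨⟨‖(a, b)‖⁻¹ • (a, b), by
        rw [mem_sphere_zero_iff_norm, norm_smul, norm_inv, norm_norm, inv_mul_cancel₀ hr]⟩, ?_⟩
      refine (mk_eq_mk_iff' ℝ _ _ _ h).2 ⟨‖(a, b)‖⁻¹, ?_⟩
      simp only [Prod.smul_fst, Prod.smul_snd, smul_eq_mul]
      module
    · rintro _ ⟨w, rfl⟩
      exact ⟨w.1.1, w.1.2, _, rfl⟩
  rw [hrange]
  exact isCompact_range (continuous_mk'.comp (by fun_prop))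

theorem isProjConvex_sUnion_of_directedOn {W : Type*} [AddCommGroup W] [Module ℝ W]
    {F : Set (Set (ℙ ℝ W))} (hdir : DirectedOn (· ⊆ ·) F) (hF : ∀ S ∈ F, IsProjConvex S)
    (hline : ∀ p q : ℙ ℝ W, p ≠ q → ¬ projLine p.rep q.rep ⊆ ⋃₀ F) :
    IsProjConvex (⋃₀ F) := by
  rintro p ⟨S₁, hS₁, hp⟩ q ⟨S₂, hS₂, hq⟩ hpq
  obtain ⟨S, hS, h₁, h₂⟩ := hdir S₁ hS₁ S₂ hS₂
  have hSU : S ⊆ ⋃₀ F := subset_sUnion_of_mem hS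
  have hnot := hline p q hpq
  rw [← projSeg_union_projSegN, union_subset_iff] at hnot
  rcases hF S hS p (h₁ hp) q (h₂ hq) hpq with ⟨hP, -⟩ | ⟨hN, -⟩
  · exact Or.inl ⟨hP.trans hSU, fun hN => hnot ⟨hP.trans hSU, hN⟩⟩
  · exact Or.inr ⟨hN.trans hSU, fun hP => hnot ⟨hP, hN.trans hSU⟩⟩

theorem sUnion_directed_open_projConvex_general
    {V : Type*} [NormedAddCommGroup V] [NormedSpace ℝ V]
    (F : Set (Set (ℙ ℝ V))) (hne : F.Nonempty) (hdir : DirectedOn (· ⊆ ·) F)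
    (hF : ∀ S ∈ F, IsOpen S ∧ IsProjConvex S) :
    IsOpen (⋃₀ F) ∧ IsProjConvex (⋃₀ F) := by
  have hopen : ∀ S ∈ F, IsOpen S := fun S hS => (hF S hS).1
  refine ⟨isOpen_sUnion hopen,
    isProjConvex_sUnion_of_directedOn hdir (fun S hS => (hF S hS).2) ?_⟩
  intro p q hpq hline
  obtain ⟨T, hTF, hlineT⟩ := (isCompact_projLine (linearIndependent_rep_pair hpq))
    |>.exists_mem_subset_of_subset_sUnion_of_directedOn hne hdir hopen hline
  exact (hF T hTF).2.not_projLine_subset hpq hlineT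

/-- The union of a directed (under inclusion) family of open projective convex sets in a real
projective space is an open projective convex set. -/
theorem sUnion_directed_open_projConvex
    {V : Type*} [NormedAddCommGroup V] [NormedSpace ℝ V] [FiniteDimensional ℝ V]
    (F : Set (Set (ℙ ℝ V))) (hne : F.Nonempty) (hdir : DirectedOn (· ⊆ ·) F)
    (hF : ∀ S ∈ F, IsOpen S ∧ IsProjConvex S) :
    IsOpen (⋃₀ F) ∧ IsProjConvex (⋃₀ F) :=
  sUnion_directed_open_projConvex_general F hne hdir hF
end

section
/- The complement of a projective hyperplane in a real projective space is a maximal projective convex set: it is projective convex, and any projective convex set containing it equals it. -/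
open scoped LinearAlgebra.Projectivization
open Projectivization

/-!
The complement `S` of the hyperplane `φ = 0` meets the projective line through two of its points
`p, q` in exactly one of the two segments: the one along which `φ` keeps the sign it has at the
endpoints. The other segment contains the point `φ(q)•p - φ(p)•q` of the hyperplane, so `S` is
projective convex. If a projective convex set `B ⊇ S` contained a point `x` of the hyperplane, then
for `p ∈ S` the whole line through `p` and `x` would lie in `B`, since all its points other than `x`
lie in `S`; then both segments from `p` to `x` lie in `B`, which convexity forbids.
-/

theorem IsProjConvex.exists_mk_notMem {V : Type*} [AddCommGroup V] [Module ℝ V]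
    {B : Set (ℙ ℝ V)} (hB : IsProjConvex B) {p q : ℙ ℝ V} (hp : p ∈ B) (hq : q ∈ B)
    (hpq : p ≠ q) : ∃ (a b : ℝ) (h : a • p.rep + b • q.rep ≠ 0), mk ℝ _ h ∉ B := by
  rcases hB p hp q hq hpq with ⟨-, h⟩ | ⟨-, h⟩ <;>
  · obtain ⟨_, ⟨a, b, hne, -, rfl⟩, hx⟩ := Set.not_subset.1 h
    exact ⟨a, b, hne, hx⟩

namespace Projectivization

theorem mk_smul_rep {K V : Type*} [DivisionRing K] [AddCommGroup V] [Module K V]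
    (x : ℙ K V) {c : K} (h : c • x.rep ≠ 0) : mk K (c • x.rep) h = x := by
  conv_rhs => rw [← mk_rep x]
  exact (mk_eq_mk_iff' K _ _ h x.rep_nonzero).2 ⟨c, rfl⟩

def hyperplaneCompl {K V : Type*} [DivisionRing K] [AddCommGroup V] [Module K V]
    (φ : Module.Dual K V) : Set (ℙ K V) :=
  {x | φ x.rep ≠ 0}

theorem mk_mem_hyperplaneCompl_iff {K V : Type*} [DivisionRing K] [AddCommGroup V]
    [Module K V] (φ : Module.Dual K V) {z : V} (hz : z ≠ 0) :
    mk K z hz ∈ hyperplaneCompl φ ↔ φ z ≠ 0 := by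
  obtain ⟨c, hc⟩ := exists_smul_eq_mk_rep K z hz
  rw [hyperplaneCompl, Set.mem_ofPred_eq, ← hc, Units.smul_def, map_smul, smul_ne_zero_iff,
    and_iff_right c.ne_zero]

section Real

variable {V : Type*} [AddCommGroup V] [Module ℝ V] (φ : Module.Dual ℝ V)

theorem map_smul_add_smul_ne_zero {u v : V} (hu : φ u ≠ 0) (hv : φ v ≠ 0) {a b : ℝ}
    (hab : 0 ≤ a * b * (φ u * φ v)) (hne : a • u + b • v ≠ 0) : φ (a • u + b • v) ≠ 0 := by
  intro h
  rw [map_add, map_smul, map_smul, smul_eq_mul, smul_eq_mul] at h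
  -- the two summands `a φ(u)` and `b φ(v)` have the same sign, so both vanish
  have hau : a * φ u = 0 := by nlinarith [sq_nonneg (a * φ u)]
  have ha : a = 0 := (mul_eq_zero.1 hau).resolve_right hu
  have hb : b = 0 := by
    rw [ha, zero_mul, zero_add] at h
    exact (mul_eq_zero.1 h).resolve_right hv
  exact hne (by rw [ha, hb, zero_smul, zero_smul, add_zero])

theorem projSeg_subset_hyperplaneCompl {u v : V} (h : 0 < φ u * φ v) :
    projSeg u v ⊆ hyperplaneCompl φ := by
  rintro _ ⟨a, b, hne, hab, rfl⟩
  exact (mk_mem_hyperplaneCompl_iff φ hne).2 <| map_smul_add_smul_ne_zero φ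
    (left_ne_zero_of_mul h.ne') (right_ne_zero_of_mul h.ne') (mul_nonneg hab h.le) hne

theorem projSegN_subset_hyperplaneCompl {u v : V} (h : φ u * φ v < 0) :
    projSegN u v ⊆ hyperplaneCompl φ := by
  rintro _ ⟨a, b, hne, hab, rfl⟩
  exact (mk_mem_hyperplaneCompl_iff φ hne).2 <| map_smul_add_smul_ne_zero φ
    (left_ne_zero_of_mul h.ne) (right_ne_zero_of_mul h.ne)
    (mul_nonneg_of_nonpos_of_nonpos hab h.le) hne

theorem isProjConvex_hyperplaneCompl : IsProjConvex (hyperplaneCompl φ) := by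
  intro p hp q hq hpq
  have hc : φ q.rep • p.rep + (-φ p.rep) • q.rep ≠ 0 := fun h =>
    hp <| neg_eq_zero.1 (LinearIndependent.pair_iff.1 (linearIndependent_pair_iff_ne.2 hpq) _ _ h).2
  have hc_notMem : mk ℝ _ hc ∉ hyperplaneCompl φ := by
    rw [mk_mem_hyperplaneCompl_iff, not_not, map_add, map_smul, map_smul, smul_eq_mul,
      smul_eq_mul]
    ring
  rcases (mul_ne_zero hp hq).lt_or_gt with hneg | hpos
  · exact Or.inr ⟨projSegN_subset_hyperplaneCompl φ hneg,
      fun h => hc_notMem (h ⟨_, _, hc, by nlinarith, rfl⟩)⟩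
  · exact Or.inl ⟨projSeg_subset_hyperplaneCompl φ hpos,
      fun h => hc_notMem (h ⟨_, _, hc, by nlinarith, rfl⟩)⟩

theorem eq_hyperplaneCompl_of_isProjConvex (hφ : φ ≠ 0) {B : Set (ℙ ℝ V)} (hB : IsProjConvex B)
    (hφB : hyperplaneCompl φ ⊆ B) : B = hyperplaneCompl φ := by
  refine Set.Subset.antisymm (fun x hx => ?_) hφB
  by_contra hxφ
  obtain ⟨w, hw⟩ : ∃ w, φ w ≠ 0 := not_forall.1 fun h => hφ (LinearMap.ext h)
  have hp := (mk_mem_hyperplaneCompl_iff φ (ne_of_apply_ne φ (by rwa [map_zero]))).2 hw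
  obtain ⟨a, b, hne, hnotMem⟩ := hB.exists_mk_notMem (hφB hp) hx (ne_of_mem_of_not_mem hp hxφ)
  have ha : a = 0 := by
    by_contra ha
    refine hnotMem (hφB ((mk_mem_hyperplaneCompl_iff φ hne).2 ?_))
    rw [map_add, map_smul, map_smul, not_not.1 hxφ, smul_zero, add_zero]
    exact smul_ne_zero ha hp
  subst ha
  rw [zero_smul, zero_add] at hne
  exact hnotMem (by simpa only [zero_smul, zero_add, mk_smul_rep] using hx)

end Real

end Projectivization

theorem hyperplane_compl_maximal_projConvex_general
    {V : Type*} [AddCommGroup V] [Module ℝ V]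
    (φ : Module.Dual ℝ V) (hφ : φ ≠ 0) :
    IsProjConvex {x : ℙ ℝ V | φ x.rep ≠ 0} ∧
      ∀ B : Set (ℙ ℝ V), IsProjConvex B → {x : ℙ ℝ V | φ x.rep ≠ 0} ⊆ B →
        B = {x : ℙ ℝ V | φ x.rep ≠ 0} :=
  ⟨isProjConvex_hyperplaneCompl φ, fun _ hB hφB => eq_hyperplaneCompl_of_isProjConvex φ hφ hB hφB⟩

/-- The complement of a projective hyperplane is a maximal projective convex set: it is
projective convex, and every projective convex set containing it equals it. -/
theorem hyperplane_compl_maximal_projConvex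
    {V : Type*} [AddCommGroup V] [Module ℝ V] [FiniteDimensional ℝ V]
    (φ : Module.Dual ℝ V) (hφ : φ ≠ 0) :
    IsProjConvex {x : ℙ ℝ V | φ x.rep ≠ 0} ∧
      ∀ B : Set (ℙ ℝ V), IsProjConvex B → {x : ℙ ℝ V | φ x.rep ≠ 0} ⊆ B →
        B = {x : ℙ ℝ V | φ x.rep ≠ 0} :=
  hyperplane_compl_maximal_projConvex_general φ hφ
end

section
/- For a multi-convex set C in a real projective space, the family cocomp(C) of minimal projective convex sets containing C (co-components) is mutually inconsistent (no two distinct co-components are contained in a common projective convex set), and C equals the intersection of its co-components. -/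
open scoped LinearAlgebra.Projectivization
open Projectivization

/-- A multi-convex set: an intersection of a nonempty family of projective convex sets. -/
def IsMultiConvex {W : Type*} [AddCommGroup W] [Module ℝ W] (C : Set (ℙ ℝ W)) : Prop :=
  ∃ F : Set (Set (ℙ ℝ W)), F.Nonempty ∧ (∀ S ∈ F, IsProjConvex S) ∧ C = ⋂₀ F

/-- A co-component of `C`: a minimal projective convex set containing `C`. -/
def IsCocomponent {W : Type*} [AddCommGroup W] [Module ℝ W] (C N : Set (ℙ ℝ W)) : Prop :=
  Minimal (fun M => IsProjConvex M ∧ C ⊆ M) N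

/-!
Whenever a projective convex set `T` lies inside a projective convex set `S`, both choose the
same segment between any two points of `T`. Hence two convex sets inside a common convex set
choose compatibly, so their intersection is again convex: two distinct co-components in a
common convex set would contain the convex set `N ∩ N'` between `C` and themselves, contradicting
minimality. For the same reason a decreasing chain of convex sets has a convex intersection, so
Zorn's lemma puts a co-component of `C` inside each of the convex sets cutting out `C`.
-/

section

variable {W : Type*} [AddCommGroup W] [Module ℝ W]

namespace IsProjConvex

variable {S T : Set (ℙ ℝ W)} {p q : ℙ ℝ W}

theorem projSeg_subset_iff_not (hS : IsProjConvex S) (hp : p ∈ S) (hq : q ∈ S) (hpq : p ≠ q) :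
    projSeg p.rep q.rep ⊆ S ↔ ¬ projSegN p.rep q.rep ⊆ S :=
  xor_iff_iff_not.1 (hS p hp q hq hpq)

theorem projSeg_subset_iff_of_subset (hS : IsProjConvex S) (hT : IsProjConvex T) (hTS : T ⊆ S)
    (hp : p ∈ T) (hq : q ∈ T) (hpq : p ≠ q) :
    projSeg p.rep q.rep ⊆ T ↔ projSeg p.rep q.rep ⊆ S :=
  ⟨fun h => h.trans hTS, fun h => (hT.projSeg_subset_iff_not hp hq hpq).2 fun hN =>
    (hS.projSeg_subset_iff_not (hTS hp) (hTS hq) hpq).1 h (hN.trans hTS)⟩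

theorem projSegN_subset_iff_of_subset (hS : IsProjConvex S) (hT : IsProjConvex T) (hTS : T ⊆ S)
    (hp : p ∈ T) (hq : q ∈ T) (hpq : p ≠ q) :
    projSegN p.rep q.rep ⊆ T ↔ projSegN p.rep q.rep ⊆ S := by
  rw [← not_iff_not, ← hT.projSeg_subset_iff_not hp hq hpq,
    ← hS.projSeg_subset_iff_not (hTS hp) (hTS hq) hpq]
  exact hS.projSeg_subset_iff_of_subset hT hTS hp hq hpq

theorem inter_of_subset {N N' M : Set (ℙ ℝ W)} (hN : IsProjConvex N) (hN' : IsProjConvex N')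
    (hM : IsProjConvex M) (hNM : N ⊆ M) (hN'M : N' ⊆ M) : IsProjConvex (N ∩ N') := by
  intro p hp q hq hpq
  rw [Set.subset_inter_iff, Set.subset_inter_iff,
    hM.projSeg_subset_iff_of_subset hN hNM hp.1 hq.1 hpq,
    hM.projSeg_subset_iff_of_subset hN' hN'M hp.2 hq.2 hpq,
    hM.projSegN_subset_iff_of_subset hN hNM hp.1 hq.1 hpq,
    hM.projSegN_subset_iff_of_subset hN' hN'M hp.2 hq.2 hpq, and_self, and_self]
  exact hM p (hNM hp.1) q (hNM hq.1) hpq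

theorem sInter_of_isChain {c : Set (Set (ℙ ℝ W))} (hc : ∀ S ∈ c, IsProjConvex S)
    (hchain : IsChain (· ⊆ ·) c) (hne : c.Nonempty) : IsProjConvex (⋂₀ c) := by
  intro p hp q hq hpq
  obtain ⟨S₀, hS₀⟩ := hne
  have agree : ∀ T ∈ c, (projSeg p.rep q.rep ⊆ T ↔ projSeg p.rep q.rep ⊆ S₀) ∧
      (projSegN p.rep q.rep ⊆ T ↔ projSegN p.rep q.rep ⊆ S₀) := by
    intro T hT
    rcases hchain.total hT hS₀ with h | h
    · exact ⟨(hc S₀ hS₀).projSeg_subset_iff_of_subset (hc T hT) h (hp T hT) (hq T hT) hpq,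
        (hc S₀ hS₀).projSegN_subset_iff_of_subset (hc T hT) h (hp T hT) (hq T hT) hpq⟩
    · exact ⟨((hc T hT).projSeg_subset_iff_of_subset (hc S₀ hS₀) h (hp S₀ hS₀) (hq S₀ hS₀)
        hpq).symm, ((hc T hT).projSegN_subset_iff_of_subset (hc S₀ hS₀) h (hp S₀ hS₀)
        (hq S₀ hS₀) hpq).symm⟩
  have hseg : projSeg p.rep q.rep ⊆ ⋂₀ c ↔ projSeg p.rep q.rep ⊆ S₀ :=
    Set.subset_sInter_iff.trans
      ⟨fun h => h S₀ hS₀, fun h T hT => (agree T hT).1.2 h⟩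
  have hsegN : projSegN p.rep q.rep ⊆ ⋂₀ c ↔ projSegN p.rep q.rep ⊆ S₀ :=
    Set.subset_sInter_iff.trans
      ⟨fun h => h S₀ hS₀, fun h T hT => (agree T hT).2.2 h⟩
  rw [hseg, hsegN]
  exact hc S₀ hS₀ p (hp S₀ hS₀) q (hq S₀ hS₀) hpq

end IsProjConvex

variable {C : Set (ℙ ℝ W)}

theorem exists_isCocomponent_subset {S : Set (ℙ ℝ W)} (hS : IsProjConvex S) (hCS : C ⊆ S) :
    ∃ N, IsCocomponent C N ∧ N ⊆ S := by
  obtain ⟨N, hNS, hN⟩ := zorn_superset_nonempty {M | IsProjConvex M ∧ C ⊆ M}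
    (fun c hc hchain hne => ⟨⋂₀ c,
      ⟨IsProjConvex.sInter_of_isChain (fun T hT => (hc hT).1) hchain hne,
        Set.subset_sInter fun T hT => (hc hT).2⟩,
      fun _ => Set.sInter_subset_of_mem⟩) S ⟨hS, hCS⟩
  exact ⟨N, hN, hNS⟩

theorem IsCocomponent.eq_of_subset_isProjConvex {N N' M : Set (ℙ ℝ W)} (hN : IsCocomponent C N)
    (hN' : IsCocomponent C N') (hM : IsProjConvex M) (hNM : N ⊆ M) (hN'M : N' ⊆ M) :
    N = N' := by
  have hI : IsProjConvex (N ∩ N') ∧ C ⊆ N ∩ N' :=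
    ⟨hN.1.1.inter_of_subset hN'.1.1 hM hNM hN'M, Set.subset_inter hN.1.2 hN'.1.2⟩
  have hNI : N ⊆ N ∩ N' := hN.2 hI Set.inter_subset_left
  have hN'I : N' ⊆ N ∩ N' := hN'.2 hI Set.inter_subset_right
  exact hNI.trans Set.inter_subset_right |>.antisymm (hN'I.trans Set.inter_subset_left)

theorem IsMultiConvex.eq_sInter_cocomponents (hC : IsMultiConvex C) :
    C = ⋂₀ {N | IsCocomponent C N} := by
  obtain ⟨F, -, hF, rfl⟩ := hC
  refine (Set.subset_sInter fun N hN => hN.1.2).antisymm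
    (Set.subset_sInter fun S hS => ?_)
  obtain ⟨N, hN, hNS⟩ := exists_isCocomponent_subset (hF S hS) (Set.sInter_subset_of_mem hS)
  exact (Set.sInter_subset_of_mem hN).trans hNS

end

theorem cocomponents_inconsistent_and_inter_general
    {V : Type*} [AddCommGroup V] [Module ℝ V]
    (C : Set (ℙ ℝ V)) (hC : IsMultiConvex C) :
    (∀ N N' : Set (ℙ ℝ V), IsCocomponent C N → IsCocomponent C N' → N ≠ N' →
      ¬ ∃ M : Set (ℙ ℝ V), IsProjConvex M ∧ N ⊆ M ∧ N' ⊆ M) ∧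
    C = ⋂₀ {N : Set (ℙ ℝ V) | IsCocomponent C N} :=
  ⟨fun _ _ hN hN' hne ⟨_, hM, hNM, hN'M⟩ => hne (hN.eq_of_subset_isProjConvex hN' hM hNM hN'M),
    hC.eq_sInter_cocomponents⟩

/-- For a multi-convex set `C`, the co-components form a mutually inconsistent family (no two
distinct co-components are contained in a common projective convex set), and `C` is the
intersection of its co-components. -/
theorem cocomponents_inconsistent_and_inter
    {V : Type*} [AddCommGroup V] [Module ℝ V] [FiniteDimensional ℝ V]
    (C : Set (ℙ ℝ V)) (hC : IsMultiConvex C) :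
    (∀ N N' : Set (ℙ ℝ V), IsCocomponent C N → IsCocomponent C N' → N ≠ N' →
      ¬ ∃ M : Set (ℙ ℝ V), IsProjConvex M ∧ N ⊆ M ∧ N' ⊆ M) ∧
    C = ⋂₀ {N : Set (ℙ ℝ V) | IsCocomponent C N} :=
  cocomponents_inconsistent_and_inter_general C hC
end

section
/- If C is a multi-convex set in a real projective space, N and N' are co-components of C, and there exists a projective convex set M containing both N and N', then N = N'. -/
open scoped LinearAlgebra.Projectivization
open Projectivization

/-! Between two of its points, a projective convex subset of a projective convex set `M` contains
the same one of the two projective segments as `M` does. Hence two projective convex subsets of `M`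
have a projective convex intersection, and by minimality two co-components of `C` inside `M` both
equal their intersection. -/

lemma IsProjConvex.projSeg_subset_iff_of_subset_s13 {W : Type*} [AddCommGroup W] [Module ℝ W]
    {M A : Set (ℙ ℝ W)} (hM : IsProjConvex M) (hA : IsProjConvex A) (hAM : A ⊆ M)
    {p q : ℙ ℝ W} (hp : p ∈ A) (hq : q ∈ A) (hpq : p ≠ q) :
    (projSeg p.rep q.rep ⊆ A ↔ projSeg p.rep q.rep ⊆ M) ∧
      (projSegN p.rep q.rep ⊆ A ↔ projSegN p.rep q.rep ⊆ M) := by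
  have hxA := hA p hp q hq hpq
  have hxM := hM p (hAM hp) q (hAM hq) hpq
  have hseg : projSeg p.rep q.rep ⊆ A → projSeg p.rep q.rep ⊆ M := fun h => h.trans hAM
  have hsegN : projSegN p.rep q.rep ⊆ A → projSegN p.rep q.rep ⊆ M := fun h => h.trans hAM
  unfold Xor' Xor at hxA hxM
  tauto

lemma IsProjConvex.inter_of_subset_s13 {W : Type*} [AddCommGroup W] [Module ℝ W]
    {M A B : Set (ℙ ℝ W)} (hM : IsProjConvex M) (hA : IsProjConvex A) (hB : IsProjConvex B)
    (hAM : A ⊆ M) (hBM : B ⊆ M) : IsProjConvex (A ∩ B) := by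
  intro p hp q hq hpq
  obtain ⟨hAseg, hAsegN⟩ := hM.projSeg_subset_iff_of_subset_s13 hA hAM hp.1 hq.1 hpq
  obtain ⟨hBseg, hBsegN⟩ := hM.projSeg_subset_iff_of_subset_s13 hB hBM hp.2 hq.2 hpq
  simp only [Set.subset_inter_iff, hAseg, hAsegN, hBseg, hBsegN, and_self]
  exact hM p (hAM hp.1) q (hAM hq.1) hpq

theorem cocomponents_eq_of_common_convex_general
    {V : Type*} [AddCommGroup V] [Module ℝ V]
    (C : Set (ℙ ℝ V))
    (N N' : Set (ℙ ℝ V)) (hN : IsCocomponent C N) (hN' : IsCocomponent C N')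
    (M : Set (ℙ ℝ V)) (hM : IsProjConvex M) (hNM : N ⊆ M) (hN'M : N' ⊆ M) :
    N = N' := by
  have hconv : IsProjConvex (N ∩ N') := hM.inter_of_subset_s13 hN.1.1 hN'.1.1 hNM hN'M
  have hCsub : C ⊆ N ∩ N' := Set.subset_inter hN.1.2 hN'.1.2
  have hNsub : N ⊆ N ∩ N' := hN.2 ⟨hconv, hCsub⟩ Set.inter_subset_left
  have hN'sub : N' ⊆ N ∩ N' := hN'.2 ⟨hconv, hCsub⟩ Set.inter_subset_right
  exact (hNsub.trans Set.inter_subset_right).antisymm (hN'sub.trans Set.inter_subset_left)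

/-- Two co-components of a multi-convex set contained in a common projective convex set are
equal. -/
theorem cocomponents_eq_of_common_convex
    {V : Type*} [AddCommGroup V] [Module ℝ V] [FiniteDimensional ℝ V]
    (C : Set (ℙ ℝ V)) (hC : IsMultiConvex C)
    (N N' : Set (ℙ ℝ V)) (hN : IsCocomponent C N) (hN' : IsCocomponent C N')
    (M : Set (ℙ ℝ V)) (hM : IsProjConvex M) (hNM : N ⊆ M) (hN'M : N' ⊆ M) :
    N = N' :=
  cocomponents_eq_of_common_convex_general C N N' hN hN' M hM hNM hN'M
end

section
/- Let C be a saturated multi-convex set in a real projective space and p a point not in C. Then there exists an irreducible convex set (the complement of a projective hyperplane) containing C and avoiding p. -/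
open scoped LinearAlgebra.Projectivization
open Projectivization

/-- A saturated multi-convex set: an intersection of a nonempty family of open projective
convex sets. -/
def IsSatMultiConvex {W : Type*} [NormedAddCommGroup W] [NormedSpace ℝ W]
    (C : Set (ℙ ℝ W)) : Prop :=
  ∃ F : Set (Set (ℙ ℝ W)), F.Nonempty ∧ (∀ S ∈ F, IsOpen S ∧ IsProjConvex S) ∧ C = ⋂₀ F


/-!
Fix `Ω` in the family with `p ∉ Ω`, and let `Ω̂ ⊆ V ∖ {0}` be the cone over `Ω`. Projective
convexity of `Ω` says that for linearly independent `u, v ∈ Ω̂` exactly one of the affine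
segments `[u, v]`, `[u, -v]` lies in `Ω̂`; for dependent `u, v` the same dichotomy is read off
directly. Hence for a base point `w ∈ Ω̂` the star `K = {v | [w, v] ⊆ Ω̂}` satisfies
`Ω̂ = K ∪ -K` with `K ∩ -K = ∅`. Since `Ω` is open, so is `K`, and as segments are connected,
a segment of `Ω̂` starting in `K` stays in `K`; this makes `K` convex. Hahn–Banach then gives a
functional vanishing on the line through `p` and negative on `K`, hence nonzero on `Ω̂`, which
contains the cone over `C`. If `Ω` is empty, any nonzero functional vanishing at `p` will do; it
exists because `dim V ≥ 2`.
-/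

open Set
open scoped Pointwise

theorem zero_mem_segment_smul {𝕜 E : Type*} [Field 𝕜] [LinearOrder 𝕜] [IsStrictOrderedRing 𝕜]
    [AddCommGroup E] [Module 𝕜 E] (u : E) {t : 𝕜} (ht : t ≤ 0) : (0 : E) ∈ segment 𝕜 u (t • u) := by
  rw [mem_segment_iff_sameRay, zero_sub, sub_zero, ← neg_smul_neg]
  exact SameRay.sameRay_nonneg_smul_right (-u) (neg_nonneg.2 ht)

theorem exists_smul_eq_of_not_linearIndependent {K E : Type*} [Field K] [AddCommGroup E]
    [Module K E] {u v : E} (hu : u ≠ 0) (huv : ¬LinearIndependent K ![u, v]) :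
    ∃ t : K, t • u = v := by
  simpa [LinearIndependent.pair_iff' hu] using huv

section Cone

variable {V : Type*} [AddCommGroup V] [Module ℝ V] {Ω : Set (ℙ ℝ V)} {u v : V}

def projCone (Ω : Set (ℙ ℝ V)) : Set V :=
  {v | ∃ h : v ≠ 0, mk ℝ v h ∈ Ω}

theorem ne_zero_of_mem_projCone (hv : v ∈ projCone Ω) : v ≠ 0 :=
  hv.1

@[simp]
theorem rep_mem_projCone_iff {x : ℙ ℝ V} : x.rep ∈ projCone Ω ↔ x ∈ Ω :=
  ⟨fun ⟨_, hx⟩ => by rwa [mk_rep] at hx, fun hx => ⟨x.rep_nonzero, by rwa [mk_rep]⟩⟩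

theorem smul_mem_projCone (hv : v ∈ projCone Ω) {t : ℝ} (ht : t ≠ 0) : t • v ∈ projCone Ω := by
  obtain ⟨hv0, hvΩ⟩ := hv
  refine ⟨smul_ne_zero ht hv0, ?_⟩
  rwa [(mk_eq_mk_iff' ℝ _ v _ hv0).2 ⟨t, rfl⟩]

theorem disjoint_projCone_span_rep {p : ℙ ℝ V} (hp : p ∉ Ω) :
    Disjoint (projCone Ω) (ℝ ∙ p.rep) := by
  refine disjoint_left.2 fun x hx hxp => hp ?_
  obtain ⟨c, rfl⟩ := Submodule.mem_span_singleton.1 hxp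
  have hc : c ≠ 0 := by rintro rfl; exact ne_zero_of_mem_projCone hx (zero_smul ℝ _)
  simpa [inv_smul_smul₀ hc] using smul_mem_projCone hx (inv_ne_zero hc)

theorem projSeg_subset_iff :
    projSeg u v ⊆ Ω ↔
      ∀ a b : ℝ, 0 ≤ a * b → a • u + b • v ≠ 0 → a • u + b • v ∈ projCone Ω := by
  refine ⟨fun h a b hab hne => ⟨hne, h ⟨a, b, hne, hab, rfl⟩⟩, ?_⟩
  rintro h x ⟨a, b, hne, hab, rfl⟩
  exact (h a b hab hne).2

theorem projSeg_smul_smul {c d : ℝ} (hcd : 0 < c * d) : projSeg (c • u) (d • v) = projSeg u v := by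
  have hc : c ≠ 0 := left_ne_zero_of_mul hcd.ne'
  have hd : d ≠ 0 := right_ne_zero_of_mul hcd.ne'
  ext x
  constructor
  · rintro ⟨a, b, hne, hab, rfl⟩
    simp only [smul_smul] at hne ⊢
    exact ⟨a * c, b * d, hne, by nlinarith, rfl⟩
  · rintro ⟨a, b, hne, hab, rfl⟩
    have e : (a / c) • c • u + (b / d) • d • v = a • u + b • v := by
      simp only [smul_smul, div_mul_cancel₀ _ hc, div_mul_cancel₀ _ hd]
    refine ⟨a / c, b / d, e ▸ hne, ?_, by simp only [e]⟩
    rw [div_mul_div_comm]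
    exact div_nonneg hab hcd.le

theorem projSegN_eq_projSeg_neg (u v : V) : projSegN u v = projSeg u (-v) := by
  ext x
  constructor
  · rintro ⟨a, b, hne, hab, rfl⟩
    exact ⟨a, -b, by simpa using hne, by nlinarith, by simp only [smul_neg, neg_smul, neg_neg]⟩
  · rintro ⟨a, b, hne, hab, rfl⟩
    exact ⟨a, -b, by simpa using hne, by nlinarith, by simp only [smul_neg, neg_smul]⟩

theorem projSeg_subset_iff_segment_subset (huv : LinearIndependent ℝ ![u, v]) :
    projSeg u v ⊆ Ω ↔ segment ℝ u v ⊆ projCone Ω := by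
  rw [projSeg_subset_iff]
  constructor
  · rintro h x ⟨a, b, ha, hb, hab, rfl⟩
    refine h a b (mul_nonneg ha hb) fun h0 => ?_
    obtain ⟨rfl, rfl⟩ := LinearIndependent.pair_iff.1 huv a b h0
    norm_num at hab
  · intro h
    have hpos : ∀ a b : ℝ, 0 ≤ a → 0 ≤ b → 0 < a + b → a • u + b • v ∈ projCone Ω := by
      intro a b ha hb hab
      have e : a • u + b • v = (a + b) • ((a / (a + b)) • u + (b / (a + b)) • v) := by
        rw [smul_add, smul_smul, smul_smul, mul_div_cancel₀ _ hab.ne', mul_div_cancel₀ _ hab.ne']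
      rw [e]
      exact smul_mem_projCone (h (mem_segment_iff_div.2 ⟨a, b, ha, hb, hab, rfl⟩)) hab.ne'
    intro a b hab hne
    rcases mul_nonneg_iff.1 hab with ⟨ha, hb⟩ | ⟨ha, hb⟩
    · refine hpos a b ha hb (lt_of_le_of_ne (add_nonneg ha hb) fun h0 => hne ?_)
      obtain ⟨rfl, rfl⟩ : a = 0 ∧ b = 0 := ⟨by linarith, by linarith⟩
      simp
    · have e : a • u + b • v = (-1 : ℝ) • ((-a) • u + (-b) • v) := by simp
      rw [e]
      refine smul_mem_projCone (hpos (-a) (-b) (by linarith) (by linarith)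
        (lt_of_le_of_ne (by linarith) fun h0 => hne ?_)) (by norm_num)
      obtain ⟨rfl, rfl⟩ : a = 0 ∧ b = 0 := ⟨by linarith, by linarith⟩
      simp

theorem IsProjConvex.xor_segment_subset (hΩ : IsProjConvex Ω) (hu : u ∈ projCone Ω)
    (hv : v ∈ projCone Ω) (huv : LinearIndependent ℝ ![u, v]) :
    Xor (segment ℝ u v ⊆ projCone Ω) (segment ℝ u (-v) ⊆ projCone Ω) := by
  obtain ⟨hu0, huΩ⟩ := hu
  obtain ⟨hv0, hvΩ⟩ := hv
  have hne : mk ℝ u hu0 ≠ mk ℝ v hv0 := fun h => by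
    obtain ⟨t, ht⟩ := (mk_eq_mk_iff' ℝ v u hv0 hu0).1 h.symm
    exact (LinearIndependent.pair_iff' hu0).1 huv t ht
  obtain ⟨c, hc⟩ := exists_smul_eq_mk_rep ℝ u hu0
  obtain ⟨d, hd⟩ := exists_smul_eq_mk_rep ℝ v hv0
  have key : Xor (projSeg (mk ℝ u hu0).rep (mk ℝ v hv0).rep ⊆ Ω)
      (projSegN (mk ℝ u hu0).rep (mk ℝ v hv0).rep ⊆ Ω) := hΩ _ huΩ _ hvΩ hne
  rw [projSegN_eq_projSeg_neg, ← hc, ← hd, Units.smul_def, Units.smul_def, ← smul_neg] at key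
  rw [← projSeg_subset_iff_segment_subset huv,
    ← projSeg_subset_iff_segment_subset (LinearIndependent.pair_neg_right_iff.2 huv)]
  rcases (mul_ne_zero c.ne_zero d.ne_zero).lt_or_gt with hcd | hcd
  · rwa [← neg_smul_neg (d : ℝ) v, projSeg_smul_smul (by linarith), ← neg_smul_neg (d : ℝ) (-v),
      neg_neg, projSeg_smul_smul (by linarith), xor_comm] at key
  · rwa [projSeg_smul_smul hcd, projSeg_smul_smul hcd] at key

theorem segment_smul_subset_projCone (hu : u ∈ projCone Ω) {t : ℝ} (ht : 0 < t) :
    segment ℝ u (t • u) ⊆ projCone Ω := by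
  rintro x ⟨a, b, ha, hb, hab, rfl⟩
  rw [smul_smul, ← add_smul]
  refine smul_mem_projCone hu (ne_of_gt ?_)
  rcases ha.eq_or_lt with rfl | ha
  · rw [zero_add] at hab ⊢
    rwa [hab, one_mul]
  · exact add_pos_of_pos_of_nonneg ha (mul_nonneg hb ht.le)

theorem IsProjConvex.segment_subset_or_segment_neg_subset (hΩ : IsProjConvex Ω)
    (hu : u ∈ projCone Ω) (hv : v ∈ projCone Ω) :
    segment ℝ u v ⊆ projCone Ω ∨ segment ℝ u (-v) ⊆ projCone Ω := by
  by_cases huv : LinearIndependent ℝ ![u, v]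
  · exact (hΩ.xor_segment_subset hu hv huv).or
  obtain ⟨t, rfl⟩ := exists_smul_eq_of_not_linearIndependent (ne_zero_of_mem_projCone hu) huv
  rcases (left_ne_zero_of_smul (ne_zero_of_mem_projCone hv)).lt_or_gt with ht | ht
  · right
    rw [← neg_smul]
    exact segment_smul_subset_projCone hu (neg_pos.2 ht)
  · exact Or.inl (segment_smul_subset_projCone hu ht)

theorem IsProjConvex.not_segment_subset_and_segment_neg_subset (hΩ : IsProjConvex Ω)
    (hu : u ∈ projCone Ω) (hv : v ∈ projCone Ω) :
    ¬(segment ℝ u v ⊆ projCone Ω ∧ segment ℝ u (-v) ⊆ projCone Ω) := by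
  rintro ⟨h, hneg⟩
  by_cases huv : LinearIndependent ℝ ![u, v]
  · rcases hΩ.xor_segment_subset hu hv huv with ⟨-, h'⟩ | ⟨-, h'⟩
    exacts [h' hneg, h' h]
  obtain ⟨t, rfl⟩ := exists_smul_eq_of_not_linearIndependent (ne_zero_of_mem_projCone hu) huv
  rcases le_total t 0 with ht | ht
  · exact ne_zero_of_mem_projCone (h (zero_mem_segment_smul u ht)) rfl
  · rw [← neg_smul] at hneg
    exact ne_zero_of_mem_projCone (hneg (zero_mem_segment_smul u (neg_nonpos.2 ht))) rfl

variable {w : V}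

def projConeStar (Ω : Set (ℙ ℝ V)) (w : V) : Set V :=
  {v | segment ℝ w v ⊆ projCone Ω}

theorem projConeStar_subset_projCone : projConeStar Ω w ⊆ projCone Ω :=
  fun v hv => hv (right_mem_segment ℝ w v)

theorem self_mem_projConeStar (hw : w ∈ projCone Ω) : w ∈ projConeStar Ω w := by
  simpa [projConeStar, segment_same] using hw

theorem IsProjConvex.mem_projConeStar_or_neg_mem (hΩ : IsProjConvex Ω) (hw : w ∈ projCone Ω)
    (hv : v ∈ projCone Ω) : v ∈ projConeStar Ω w ∨ -v ∈ projConeStar Ω w :=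
  hΩ.segment_subset_or_segment_neg_subset hw hv

theorem IsProjConvex.neg_notMem_projConeStar (hΩ : IsProjConvex Ω) (hw : w ∈ projCone Ω)
    (hv : v ∈ projConeStar Ω w) : -v ∉ projConeStar Ω w := fun hv' =>
  hΩ.not_segment_subset_and_segment_neg_subset hw (projConeStar_subset_projCone hv) ⟨hv, hv'⟩

end Cone

section Topology

variable {V : Type*} [NormedAddCommGroup V] [NormedSpace ℝ V] {Ω : Set (ℙ ℝ V)} {w : V}

theorem isOpen_projCone (hΩ : IsOpen Ω) : IsOpen (projCone Ω) := by
  let π : {v : V // v ≠ 0} → ℙ ℝ V := fun v => mk ℝ v.1 v.2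
  have hπ : Continuous π := continuous_quotient_mk'
  have e : projCone Ω = Subtype.val '' (π ⁻¹' Ω) := by
    ext v
    exact ⟨fun ⟨h, hv⟩ => ⟨⟨v, h⟩, hv, rfl⟩, fun ⟨⟨_, h⟩, hv, e⟩ => e ▸ ⟨h, hv⟩⟩
  rw [e]
  exact isOpen_ne.isOpenMap_subtype_val _ (hΩ.preimage hπ)

theorem isOpen_projConeStar (hΩ : IsOpen Ω) : IsOpen (projConeStar Ω w) := by
  simp only [projConeStar, segment_eq_image, image_subset_iff]
  refine isOpen_iff_eventually.2 fun v hv => ?_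
  refine isCompact_Icc.eventually_forall_of_forall_eventually fun t ht => ?_
  have hcont : Continuous fun z : V × ℝ => (1 - z.2) • w + z.2 • z.1 := by fun_prop
  exact hcont.continuousAt.preimage_mem_nhds ((isOpen_projCone hΩ).mem_nhds (hv ht))

theorem IsPreconnected.subset_projConeStar (hΩ : IsProjConvex Ω) (hΩo : IsOpen Ω)
    (hw : w ∈ projCone Ω) {s : Set V} (hs : IsPreconnected s) (hsΩ : s ⊆ projCone Ω)
    (hsw : (s ∩ projConeStar Ω w).Nonempty) : s ⊆ projConeStar Ω w :=
  hs.subset_left_of_subset_union (isOpen_projConeStar hΩo) (isOpen_projConeStar hΩo).neg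
    (disjoint_left.2 fun _ hv hv' => hΩ.neg_notMem_projConeStar hw hv hv')
    (fun _ hv => hΩ.mem_projConeStar_or_neg_mem hw (hsΩ hv)) hsw

theorem IsProjConvex.convex_projConeStar (hΩ : IsProjConvex Ω) (hΩo : IsOpen Ω)
    (hw : w ∈ projCone Ω) : Convex ℝ (projConeStar Ω w) := by
  refine convex_iff_segment_subset.2 fun u hu v hv => ?_
  rcases hΩ.segment_subset_or_segment_neg_subset (projConeStar_subset_projCone hu)
    (projConeStar_subset_projCone hv) with h | h
  · exact (convex_segment u v).isPreconnected.subset_projConeStar hΩ hΩo hw h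
      ⟨u, left_mem_segment ℝ u v, hu⟩
  · have hneg := (convex_segment u (-v)).isPreconnected.subset_projConeStar hΩ hΩo hw h
      ⟨u, left_mem_segment ℝ u (-v), hu⟩
    exact absurd (hneg (right_mem_segment ℝ u (-v))) (hΩ.neg_notMem_projConeStar hw hv)

end Topology

theorem exists_apply_eq_zero_and_neg_of_disjoint_span {E : Type*} [TopologicalSpace E]
    [AddCommGroup E] [IsTopologicalAddGroup E] [Module ℝ E] [ContinuousSMul ℝ E]
    [LocallyConvexSpace ℝ E] {s : Set E} {v : E} (hs₁ : Convex ℝ s) (hs₂ : IsOpen s)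
    (hsv : Disjoint s (ℝ ∙ v)) : ∃ f : StrongDual ℝ E, f v = 0 ∧ ∀ x ∈ s, f x < 0 := by
  obtain ⟨f, u, hfs, hfv⟩ := geometric_hahn_banach_open hs₁ hs₂ (ℝ ∙ v).convex hsv
  have hu : u ≤ 0 := by simpa using hfv 0 (ℝ ∙ v).zero_mem
  refine ⟨f, by_contra fun hne => ?_, fun x hx => (hfs x hx).trans_le hu⟩
  have := hfv (((u - 1) / f v) • v) (Submodule.smul_mem _ _ (Submodule.mem_span_singleton_self v))
  rw [map_smul, smul_eq_mul, div_mul_cancel₀ _ hne] at this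
  linarith

theorem exists_dual_ne_zero_apply_eq_zero {K E : Type*} [Field K] [AddCommGroup E] [Module K E]
    [FiniteDimensional K E] (hE : 2 ≤ Module.finrank K E) (v : E) :
    ∃ φ : Module.Dual K E, φ ≠ 0 ∧ φ v = 0 := by
  have hlt : K ∙ v < ⊤ := by
    refine Submodule.lt_top_of_finrank_lt_finrank ?_
    have := finrank_span_le_card (R := K) ({v} : Set E)
    rw [toFinset_singleton, Finset.card_singleton] at this
    omega
  obtain ⟨φ, hφ, hφv⟩ := Submodule.exists_dual_map_eq_bot_of_lt_top hlt inferInstance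
  have hφv' := hφv.le (Submodule.mem_map_of_mem (Submodule.mem_span_singleton_self v))
  exact ⟨φ, hφ, by simpa using hφv'⟩

/-- If `C` is a saturated multi-convex set and `p ∉ C`, then there is an irreducible convex set
(the complement of a projective hyperplane) containing `C` and avoiding `p`. -/
theorem exists_irreducible_separating
    {V : Type*} [NormedAddCommGroup V] [NormedSpace ℝ V] [FiniteDimensional ℝ V]
    (h2 : 2 ≤ Module.finrank ℝ V)
    (C : Set (ℙ ℝ V)) (hC : IsSatMultiConvex C) (p : ℙ ℝ V) (hp : p ∉ C) :
    ∃ φ : Module.Dual ℝ V, φ ≠ 0 ∧ C ⊆ {x : ℙ ℝ V | φ x.rep ≠ 0} ∧ φ p.rep = 0 := by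
  obtain ⟨F, -, hF, rfl⟩ := hC
  obtain ⟨Ω, hΩF, hpΩ⟩ : ∃ Ω ∈ F, p ∉ Ω := by simpa [mem_sInter] using hp
  have hCΩ : ⋂₀ F ⊆ Ω := sInter_subset_of_mem hΩF
  obtain ⟨hΩo, hΩ⟩ := hF Ω hΩF
  rcases Ω.eq_empty_or_nonempty with rfl | ⟨q, hq⟩
  · obtain ⟨φ, hφ, hφp⟩ := exists_dual_ne_zero_apply_eq_zero h2 p.rep
    exact ⟨φ, hφ, fun x hx => (hCΩ hx).elim, hφp⟩
  have hw : q.rep ∈ projCone Ω := rep_mem_projCone_iff.2 hq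
  obtain ⟨f, hfp, hf⟩ := exists_apply_eq_zero_and_neg_of_disjoint_span
    (hΩ.convex_projConeStar hΩo hw) (isOpen_projConeStar hΩo)
    ((disjoint_projCone_span_rep hpΩ).mono_left projConeStar_subset_projCone)
  refine ⟨f, fun hf0 => ?_, fun x hx => ?_, hfp⟩
  · exact (hf _ (self_mem_projConeStar hw)).ne (by simpa using LinearMap.congr_fun hf0 q.rep)
  rcases hΩ.mem_projConeStar_or_neg_mem hw (rep_mem_projCone_iff.2 (hCΩ hx)) with h | h
  · exact (hf _ h).ne
  · simpa using (hf _ h).ne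
end

section
/- A subset S of a real projective space is a saturated multi-convex set if and only if S is the intersection of a nonempty family of irreducible convex sets, i.e., S is the intersection of the complements of all projective hyperplanes disjoint from S (and at least one such hyperplane exists). -/
open scoped LinearAlgebra.Projectivization
open Projectivization

/-!
Let `C` be open and projectively convex, `u` a representative of a point of `C`, and `K` the set
of vectors `m` such that the segment `[u, m]` lies in the cone over `C`. By projective convexity,
every vector `m` of the cone has exactly one of `m`, `-m` in `K`; as `K` and `-K` are open, `K`
contains every preconnected subset of the cone that meets it. This makes `K` convex: for
`m₁, m₂ ∈ K` the segment `[m₁, m₂]` lies in the cone, for otherwise `[m₁, -m₂]` does and carries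
`m₁ ∈ K` to `-m₂ ∈ K`. Separating the open convex set `K` from the line of a point outside `C`
(Hahn–Banach) gives a hyperplane through that point missing `C`. Conversely, complements of
hyperplanes are open and projectively convex.
-/

open Set Topology

namespace Projectivization

section Cone

variable {V : Type*} [AddCommGroup V] [Module ℝ V] {C : Set (ℙ ℝ V)} {u v w m : V}

def coneOver (C : Set (ℙ ℝ V)) : Set V := {v | ∃ hv : v ≠ 0, mk ℝ v hv ∈ C}

lemma mem_coneOver_iff (hv : v ≠ 0) : v ∈ coneOver C ↔ mk ℝ v hv ∈ C :=
  ⟨fun ⟨_, h⟩ => h, fun h => ⟨hv, h⟩⟩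

lemma ne_zero_of_mem_coneOver (hv : v ∈ coneOver C) : v ≠ 0 := hv.1

lemma rep_mem_coneOver {p : ℙ ℝ V} (hp : p ∈ C) : p.rep ∈ coneOver C :=
  ⟨p.rep_nonzero, by rwa [mk_rep]⟩

lemma smul_mem_coneOver_iff {c : ℝ} (hc : c ≠ 0) : c • v ∈ coneOver C ↔ v ∈ coneOver C := by
  rcases eq_or_ne v 0 with rfl | hv
  · rw [smul_zero]
  rw [mem_coneOver_iff hv, mem_coneOver_iff (smul_ne_zero hc hv),
    (mk_eq_mk_iff' ℝ _ _ _ hv).2 ⟨c, rfl⟩]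

lemma neg_mem_coneOver_iff : -v ∈ coneOver C ↔ v ∈ coneOver C := by
  simpa using smul_mem_coneOver_iff (C := C) (v := v) (neg_ne_zero.2 one_ne_zero)

lemma smul_add_smul_mem_coneOver (h : segment ℝ u w ⊆ coneOver C) {a b : ℝ} (ha : 0 ≤ a)
    (hb : 0 ≤ b) (hab : 0 < a + b) : a • u + b • w ∈ coneOver C := by
  have hmem := h (mem_segment_iff_div.2 ⟨a, b, ha, hb, hab, rfl⟩)
  rw [← smul_mem_coneOver_iff (inv_ne_zero hab.ne')]
  convert hmem using 1
  simp only [smul_add, smul_smul, div_eq_inv_mul]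

lemma segment_neg_subset_coneOver_iff :
    segment ℝ (-u) (-w) ⊆ coneOver C ↔ segment ℝ u w ⊆ coneOver C := by
  have key : ∀ x y : V, segment ℝ x y ⊆ coneOver C → segment ℝ (-x) (-y) ⊆ coneOver C := by
    rintro x y h _ ⟨a, b, ha, hb, hab, rfl⟩
    rw [smul_neg, smul_neg, ← neg_add, neg_mem_coneOver_iff]
    exact h ⟨a, b, ha, hb, hab, rfl⟩
  exact ⟨fun h => by simpa using key _ _ h, key u w⟩

def coneStar (C : Set (ℙ ℝ V)) (u : V) : Set V := {m | segment ℝ u m ⊆ coneOver C}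

lemma self_mem_coneStar (hu : u ∈ coneOver C) : u ∈ coneStar C u := by
  simpa [coneStar, segment_same] using hu

lemma neg_self_notMem_coneStar : -u ∉ coneStar C u := fun h =>
  ne_zero_of_mem_coneOver (h ⟨1 / 2, 1 / 2, by norm_num, by norm_num, by norm_num, by module⟩) rfl

lemma coneStar_subset_coneOver : coneStar C u ⊆ coneOver C :=
  fun m hm => hm (right_mem_segment ℝ u m)

lemma smul_mem_coneStar {t : ℝ} (ht : 0 < t) (hm : m ∈ coneStar C u) : t • m ∈ coneStar C u := by
  rintro _ ⟨a, b, ha, hb, hab, rfl⟩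
  rw [smul_smul]
  exact smul_add_smul_mem_coneOver hm ha (by positivity)
    (by nlinarith [mul_nonneg hb (sq_nonneg t), mul_nonneg ha ht.le])

lemma smul_mem_coneStar_iff {t : ℝ} (ht : 0 < t) : t • m ∈ coneStar C u ↔ m ∈ coneStar C u :=
  ⟨fun h => by simpa [smul_smul, ht.ne'] using smul_mem_coneStar (inv_pos.2 ht) h,
    smul_mem_coneStar ht⟩

lemma xor_mem_coneStar_smul_iff {a : ℝ} (ha : a ≠ 0) :
    Xor (a • m ∈ coneStar C u) (-(a • m) ∈ coneStar C u) ↔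
      Xor (m ∈ coneStar C u) (-m ∈ coneStar C u) := by
  rcases ha.lt_or_gt with ha | ha
  · rw [← neg_smul, ← neg_smul_neg a m, smul_mem_coneStar_iff (neg_pos.2 ha),
      smul_mem_coneStar_iff (neg_pos.2 ha), xor_comm]
  · rw [← smul_neg, smul_mem_coneStar_iff ha, smul_mem_coneStar_iff ha]

lemma xor_mem_coneStar_comm :
    Xor (m ∈ coneStar C u) (-m ∈ coneStar C u) ↔ Xor (u ∈ coneStar C m) (-u ∈ coneStar C m) := by
  simp only [coneStar, mem_ofPred_eq]
  rw [← segment_neg_subset_coneOver_iff (u := u) (w := -m), neg_neg, segment_symm ℝ u m,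
    segment_symm ℝ (-u) m]

lemma projSeg_subset_iff (hind : LinearIndependent ℝ ![u, w]) :
    projSeg u w ⊆ C ↔ w ∈ coneStar C u := by
  constructor
  · rintro h _ ⟨a, b, ha, hb, hab, rfl⟩
    have hne : a • u + b • w ≠ 0 := fun h0 => by
      obtain ⟨rfl, rfl⟩ := LinearIndependent.pair_iff.1 hind a b h0
      norm_num at hab
    exact (mem_coneOver_iff hne).2 (h ⟨a, b, hne, mul_nonneg ha hb, rfl⟩)
  · rintro h _ ⟨a, b, hne, hab, rfl⟩
    rw [← mem_coneOver_iff hne]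
    have hpos : ∀ a b : ℝ, 0 ≤ a → 0 ≤ b → a • u + b • w ≠ 0 → 0 < a + b := fun a b ha hb hne =>
      (add_nonneg ha hb).lt_of_ne fun h0 => hne <| by
        rw [show a = 0 by linarith, show b = 0 by linarith, zero_smul, zero_smul, add_zero]
    rcases mul_nonneg_iff.1 hab with ⟨ha, hb⟩ | ⟨ha, hb⟩
    · exact smul_add_smul_mem_coneOver h ha hb (hpos a b ha hb hne)
    · have hne' : (-a) • u + (-b) • w ≠ 0 := by rwa [neg_smul, neg_smul, ← neg_add, neg_ne_zero]
      rw [← neg_mem_coneOver_iff, neg_add, ← neg_smul, ← neg_smul]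
      exact smul_add_smul_mem_coneOver h (neg_nonneg.2 ha) (neg_nonneg.2 hb)
        (hpos _ _ (neg_nonneg.2 ha) (neg_nonneg.2 hb) hne')

lemma projSegN_eq_projSeg_neg : projSegN u w = projSeg u (-w) := by
  ext x
  constructor <;> rintro ⟨a, b, h, hab, rfl⟩ <;>
    exact ⟨a, -b, by simpa using h, by nlinarith, by simp⟩

lemma projSeg_rep_subset_iff {p q : ℙ ℝ V} (hpq : p ≠ q) :
    projSeg p.rep q.rep ⊆ C ↔ q.rep ∈ coneStar C p.rep :=
  projSeg_subset_iff (linearIndependent_pair_iff_ne.2 hpq)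

lemma projSegN_rep_subset_iff {p q : ℙ ℝ V} (hpq : p ≠ q) :
    projSegN p.rep q.rep ⊆ C ↔ -q.rep ∈ coneStar C p.rep := by
  rw [projSegN_eq_projSeg_neg, projSeg_subset_iff]
  have hind := LinearIndependent.pair_iff.1 (linearIndependent_pair_iff_ne.2 hpq)
  refine LinearIndependent.pair_iff.2 fun s t hst => ?_
  obtain ⟨hs, ht⟩ := hind s (-t) (by rwa [neg_smul, ← smul_neg])
  exact ⟨hs, neg_eq_zero.1 ht⟩

lemma xor_mem_coneStar_rep (hconv : IsProjConvex C) {p q : ℙ ℝ V} (hp : p ∈ C) (hq : q ∈ C) :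
    Xor (q.rep ∈ coneStar C p.rep) (-q.rep ∈ coneStar C p.rep) := by
  rcases eq_or_ne p q with rfl | hpq
  · exact Or.inl ⟨self_mem_coneStar (rep_mem_coneOver hp), neg_self_notMem_coneStar⟩
  · have h := hconv p hp q hq hpq
    rw [projSeg_rep_subset_iff hpq, projSegN_rep_subset_iff hpq] at h
    exact h

lemma xor_mem_coneStar_rep_left (hconv : IsProjConvex C) {p : ℙ ℝ V} (hp : p ∈ C)
    (hm : m ∈ coneOver C) : Xor (m ∈ coneStar C p.rep) (-m ∈ coneStar C p.rep) := by
  obtain ⟨hm0, hmC⟩ := hm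
  obtain ⟨a, ha⟩ := exists_smul_eq_mk_rep ℝ m hm0
  rw [← xor_mem_coneStar_smul_iff a.ne_zero, ← Units.smul_def, ha]
  exact xor_mem_coneStar_rep hconv hp hmC

lemma xor_mem_coneStar (hconv : IsProjConvex C) (hu : u ∈ coneOver C) (hm : m ∈ coneOver C) :
    Xor (m ∈ coneStar C u) (-m ∈ coneStar C u) := by
  obtain ⟨hu0, huC⟩ := hu
  obtain ⟨a, ha⟩ := exists_smul_eq_mk_rep ℝ u hu0
  rw [xor_mem_coneStar_comm, ← xor_mem_coneStar_smul_iff a.ne_zero, ← Units.smul_def, ha,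
    ← xor_mem_coneStar_comm]
  exact xor_mem_coneStar_rep_left hconv huC hm

lemma coneOver_setOf_apply_rep_ne_zero (φ : Module.Dual ℝ V) :
    coneOver {x : ℙ ℝ V | φ x.rep ≠ 0} = {v | φ v ≠ 0} := by
  ext v
  rcases eq_or_ne v 0 with rfl | hv
  · simp [coneOver]
  obtain ⟨a, ha⟩ := exists_smul_eq_mk_rep ℝ v hv
  rw [mem_coneOver_iff hv, mem_ofPred_eq, ← ha, Units.smul_def, map_smul, smul_eq_mul]
  simp [a.ne_zero]

lemma mem_coneStar_setOf_apply_rep_ne_zero_iff (φ : Module.Dual ℝ V) :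
    w ∈ coneStar {x : ℙ ℝ V | φ x.rep ≠ 0} u ↔ 0 < φ u * φ w := by
  rw [coneStar, mem_ofPred_eq, coneOver_setOf_apply_rep_ne_zero,
    show {v | φ v ≠ 0} = φ ⁻¹' {0}ᶜ from rfl, ← image_subset_iff,
    ← φ.coe_toAffineMap, image_segment, segment_eq_uIcc, subset_compl_singleton_iff, mem_uIcc]
  simp only [LinearMap.coe_toAffineMap]
  refine ⟨fun h => lt_of_not_ge fun h' => h ?_, fun h h0 => ?_⟩
  · rcases mul_nonpos_iff.1 h' with ⟨h1, h2⟩ | ⟨h1, h2⟩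
    exacts [Or.inr ⟨h2, h1⟩, Or.inl ⟨h1, h2⟩]
  · rcases h0 with ⟨h1, h2⟩ | ⟨h1, h2⟩ <;> nlinarith

lemma isProjConvex_setOf_apply_rep_ne_zero (φ : Module.Dual ℝ V) :
    IsProjConvex {x : ℙ ℝ V | φ x.rep ≠ 0} := by
  intro p hp q hq hpq
  rw [projSeg_rep_subset_iff hpq, projSegN_rep_subset_iff hpq,
    mem_coneStar_setOf_apply_rep_ne_zero_iff, mem_coneStar_setOf_apply_rep_ne_zero_iff, map_neg,
    mul_neg, neg_pos]
  rcases (mul_ne_zero hp hq).lt_or_gt with h | h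
  exacts [Or.inr ⟨h, h.not_gt⟩, Or.inl ⟨h, h.not_gt⟩]

lemma not_isProjConvex_univ (h2 : 1 < Module.finrank ℝ V) :
    ¬ IsProjConvex (univ : Set (ℙ ℝ V)) := by
  intro hconv
  have : Nontrivial V := Module.nontrivial_of_finrank_pos (zero_lt_one.trans h2)
  obtain ⟨v, hv⟩ := exists_ne (0 : V)
  obtain ⟨w, hvw⟩ := exists_linearIndependent_pair_of_one_lt_finrank h2 hv
  have hw : w ≠ 0 := by simpa using hvw.ne_zero 1
  have hpq : mk ℝ v hv ≠ mk ℝ w hw :=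
    (independent_pair_iff_ne _ _).1 ((independent_mk_iff_LinearIndependent hv hw).2 hvw)
  rcases hconv _ trivial _ trivial hpq with ⟨-, h⟩ | ⟨-, h⟩ <;> exact h (subset_univ _)

lemma exists_dual_ne_zero_apply_eq_zero (h2 : 1 < Module.finrank ℝ V) (hv : v ≠ 0) :
    ∃ φ : Module.Dual ℝ V, φ ≠ 0 ∧ φ v = 0 := by
  obtain ⟨w, hvw⟩ := exists_linearIndependent_pair_of_one_lt_finrank h2 hv
  have hw : w ∉ ℝ ∙ v := by
    rw [Submodule.mem_span_singleton]
    exact fun ⟨a, ha⟩ => (linearIndependent_fin2.1 (LinearIndependent.pair_symm_iff.1 hvw)).2 a ha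
  obtain ⟨φ, hφw, hφ⟩ := Submodule.exists_dual_map_eq_bot_of_notMem hw inferInstance
  refine ⟨φ, fun h => hφw (by simp [h]), ?_⟩
  simpa [hφ] using Submodule.mem_map_of_mem (f := φ) (Submodule.mem_span_singleton_self v)

end Cone

section Topology

variable {V : Type*} [NormedAddCommGroup V] [NormedSpace ℝ V] {C : Set (ℙ ℝ V)} {u : V}

lemma isOpen_coneOver_iff : IsOpen (coneOver C) ↔ IsOpen C := by
  have hval : IsOpenEmbedding (Subtype.val : {v : V // v ≠ 0} → V) :=
    isOpen_compl_singleton.isOpenEmbedding_subtypeVal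
  have hpre : Subtype.val ⁻¹' coneOver C = (Quotient.mk'' ⁻¹' C : Set {v : V // v ≠ 0}) := by
    ext ⟨v, hv⟩
    exact ⟨fun h => h.2, fun h => ⟨hv, h⟩⟩
  rw [hval.isOpen_iff_preimage_isOpen (fun v hv => ⟨⟨v, hv.1⟩, rfl⟩), hpre]
  exact (isQuotientMap_quotient_mk' (s := projectivizationSetoid ℝ V)).isOpen_preimage

lemma isOpen_coneStar (hC : IsOpen C) (u : V) : IsOpen (coneStar C u) := by
  have hU := isOpen_coneOver_iff.2 hC
  simp only [coneStar, segment_eq_image, image_subset_iff]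
  refine isOpen_iff_mem_nhds.2 fun m hm => isCompact_Icc.eventually_forall_of_forall_eventually
    fun t ht => ?_
  exact (by fun_prop : Continuous fun z : V × ℝ => (1 - z.2) • u + z.2 • z.1).continuousAt
    |>.preimage_mem_nhds (hU.mem_nhds (hm ht))

lemma _root_.IsPreconnected.subset_coneStar (hC : IsOpen C) (hconv : IsProjConvex C)
    (hu : u ∈ coneOver C) {s : Set V} (hs : IsPreconnected s)
    (hsU : s ⊆ coneOver C) (hsK : (s ∩ coneStar C u).Nonempty) : s ⊆ coneStar C u :=
  hs.subset_left_of_subset_union (isOpen_coneStar hC u) (isOpen_coneStar hC u).neg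
    (disjoint_left.2 fun m hm hm' => by
      rcases xor_mem_coneStar hconv hu (coneStar_subset_coneOver hm) with ⟨-, h⟩ | ⟨-, h⟩ <;>
        exact h (by assumption))
    (fun m hm => (xor_mem_coneStar hconv hu (hsU hm)).or) hsK

lemma convex_coneStar (hC : IsOpen C) (hconv : IsProjConvex C) (hu : u ∈ coneOver C) :
    Convex ℝ (coneStar C u) := by
  refine convex_iff_segment_subset.2 fun m₁ hm₁ m₂ hm₂ => ?_
  have transport : ∀ w, segment ℝ m₁ w ⊆ coneOver C → segment ℝ m₁ w ⊆ coneStar C u :=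
    fun w hw => (convex_segment m₁ w).isPreconnected.subset_coneStar hC hconv hu hw
      ⟨m₁, left_mem_segment ℝ m₁ w, hm₁⟩
  have hm₂U := coneStar_subset_coneOver hm₂
  refine transport m₂ ?_
  rcases xor_mem_coneStar hconv (coneStar_subset_coneOver hm₁) hm₂U with ⟨h, -⟩ | ⟨h, -⟩
  · exact h
  · have hneg := transport (-m₂) h (right_mem_segment ℝ m₁ (-m₂))
    rcases xor_mem_coneStar hconv hu hm₂U with ⟨-, h'⟩ | ⟨-, h'⟩
    exacts [absurd hneg h', absurd hm₂ h']

lemma isOpen_setOf_apply_rep_ne_zero [FiniteDimensional ℝ V] (φ : Module.Dual ℝ V) :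
    IsOpen {x : ℙ ℝ V | φ x.rep ≠ 0} := by
  rw [← isOpen_coneOver_iff, coneOver_setOf_apply_rep_ne_zero]
  exact isOpen_ne_fun φ.continuous_of_finiteDimensional continuous_const

theorem _root_.IsProjConvex.exists_dual_apply_rep_eq_zero_of_notMem (h2 : 1 < Module.finrank ℝ V)
    (hC : IsOpen C) (hconv : IsProjConvex C) {x : ℙ ℝ V} (hx : x ∉ C) :
    ∃ φ : Module.Dual ℝ V, φ ≠ 0 ∧ φ x.rep = 0 ∧ ∀ y ∈ C, φ y.rep ≠ 0 := by
  rcases C.eq_empty_or_nonempty with rfl | ⟨p, hp⟩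
  · obtain ⟨φ, hφ, hφx⟩ := exists_dual_ne_zero_apply_eq_zero h2 x.rep_nonzero
    exact ⟨φ, hφ, hφx, fun y hy => hy.elim⟩
  have hu := rep_mem_coneOver hp
  have hdisj : Disjoint (coneStar C p.rep) (ℝ ∙ x.rep) := by
    refine disjoint_left.2 fun m hm hmx => hx ?_
    obtain ⟨c, rfl⟩ := Submodule.mem_span_singleton.1 hmx
    have hcx := coneStar_subset_coneOver hm
    rw [smul_mem_coneOver_iff (left_ne_zero_of_smul (ne_zero_of_mem_coneOver hcx)),
      mem_coneOver_iff x.rep_nonzero, mk_rep] at hcx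
    exact hcx
  obtain ⟨f, r, hfK, hfx⟩ := geometric_hahn_banach_open (convex_coneStar hC hconv hu)
    (isOpen_coneStar hC _) (Submodule.convex _) hdisj
  have hline : ∀ c : ℝ, r ≤ c * f x.rep := fun c => by
    simpa using hfx _ (Submodule.smul_mem _ c (Submodule.mem_span_singleton_self x.rep))
  have hr : r ≤ 0 := by simpa using hline 0
  have hfx0 : f x.rep = 0 := by
    by_contra hne
    have := hline ((r - 1) / f x.rep)
    rw [div_mul_cancel₀ _ hne] at this
    linarith
  refine ⟨f, fun h => ?_, hfx0, fun y hy hfy => ?_⟩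
  · have hfp : f p.rep = 0 := by simpa using LinearMap.congr_fun h p.rep
    linarith [hfK _ (self_mem_coneStar hu)]
  · have hfy' : f y.rep = 0 := hfy
    rcases (xor_mem_coneStar hconv hu (rep_mem_coneOver hy)).or with h | h
    · linarith [hfK _ h]
    · linarith [hfK _ h, map_neg f y.rep]

end Topology

end Projectivization

/-- `S` is a saturated multi-convex set iff some projective hyperplane is disjoint from `S` and
`S` is the intersection of the complements of all projective hyperplanes disjoint from `S`
(i.e. of a nonempty family of irreducible convex sets containing `S`). -/
theorem isSatMultiConvex_iff_inter_irreducibles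
    {V : Type*} [NormedAddCommGroup V] [NormedSpace ℝ V] [FiniteDimensional ℝ V]
    (h2 : 2 ≤ Module.finrank ℝ V) (S : Set (ℙ ℝ V)) :
    IsSatMultiConvex S ↔
      ((∃ φ : Module.Dual ℝ V, φ ≠ 0 ∧ ∀ y ∈ S, φ y.rep ≠ 0) ∧
        S = {x : ℙ ℝ V | ∀ φ : Module.Dual ℝ V, φ ≠ 0 →
              (∀ y ∈ S, φ y.rep ≠ 0) → φ x.rep ≠ 0}) := by
  constructor
  · rintro ⟨F, ⟨C₀, hC₀⟩, hF, rfl⟩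
    have hsep : ∀ C ∈ F, ∀ {x}, x ∉ C →
        ∃ φ : Module.Dual ℝ V, φ ≠ 0 ∧ φ x.rep = 0 ∧ ∀ y ∈ C, φ y.rep ≠ 0 :=
      fun C hC _ hx => (hF C hC).2.exists_dual_apply_rep_eq_zero_of_notMem h2 (hF C hC).1 hx
    refine ⟨?_, Subset.antisymm (fun x hx φ _ hφ => hφ x hx) fun x hx => ?_⟩
    · obtain ⟨x, hx⟩ : ∃ x, x ∉ C₀ := by
        by_contra! h
        exact not_isProjConvex_univ h2 (eq_univ_of_forall h ▸ (hF C₀ hC₀).2)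
      obtain ⟨φ, hφ, -, hφC⟩ := hsep C₀ hC₀ hx
      exact ⟨φ, hφ, fun y hy => hφC y (hy C₀ hC₀)⟩
    · refine mem_sInter.2 fun C hC => by_contra fun hxC => ?_
      obtain ⟨φ, hφ, hφx, hφC⟩ := hsep C hC hxC
      exact hx φ hφ (fun y hy => hφC y (hy C hC)) hφx
  · rintro ⟨⟨φ₀, hφ₀, hφ₀S⟩, hS⟩
    refine ⟨{T | ∃ φ : Module.Dual ℝ V, φ ≠ 0 ∧ (∀ y ∈ S, φ y.rep ≠ 0) ∧
      T = {x | φ x.rep ≠ 0}}, ⟨_, φ₀, hφ₀, hφ₀S, rfl⟩, ?_, ?_⟩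
    · rintro _ ⟨φ, -, -, rfl⟩
      exact ⟨isOpen_setOf_apply_rep_ne_zero φ, isProjConvex_setOf_apply_rep_ne_zero φ⟩
    · refine Subset.antisymm (fun x hx => ?_) fun x hx => ?_
      · rintro _ ⟨φ, -, hφ, rfl⟩
        exact hφ x hx
      · rw [hS]
        exact fun φ hφ hφS => hx _ ⟨φ, hφ, hφS, rfl⟩
end
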